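/- Let (X,d) be a compact metric space and F a finite commutative set of continuous self-maps of X containing two distinct maps. Then F is not super-weakly mixing and not super-topologically mixing. -/
import Mathlib


open Set Filter Metric TopologicalSpace

/-- The image of a set `A` under a relation given by a family `F` of self-maps:
`F(A) = ⋃_{f ∈ F} f(A)`. -/
def relImage {X : Type*} (F : Set (X → X)) (A : Set X) : Set X :=
  ⋃ f ∈ F, f '' A

/-- `F^n(x)`: the set of values at `x` of all `n`-fold compositions of members of `F`. -/
def relIter {X : Type*} (F : Set (X → X)) (n : ℕ) (x : X) : Set X :=
  (relImage F)^[n] {x}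

/-- `F` is super-weakly mixing if for all nonempty open sets `U₁, U₂, V₁, V₂` there exist
`n ≥ 1` and `x_i ∈ U_i` with `F^n(x_i) ⊆ V_i` for `i = 1, 2`. -/
def SuperWeaklyMixing {X : Type*} [TopologicalSpace X] (F : Set (X → X)) : Prop :=
  ∀ U₁ U₂ V₁ V₂ : Set X, IsOpen U₁ → IsOpen U₂ → IsOpen V₁ → IsOpen V₂ →
    U₁.Nonempty → U₂.Nonempty → V₁.Nonempty → V₂.Nonempty →
    ∃ n : ℕ, 1 ≤ n ∧ ∃ x₁ ∈ U₁, ∃ x₂ ∈ U₂, relIter F n x₁ ⊆ V₁ ∧ relIter F n x₂ ⊆ V₂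

/-- `F` is super-topologically mixing if for every pair of nonempty open sets `U, V` there
exists `K ≥ 1` such that for every `n ≥ K` there is `x ∈ U` with `F^n(x) ⊆ V`. -/
def SuperTopMixing {X : Type*} [TopologicalSpace X] (F : Set (X → X)) : Prop :=
  ∀ U V : Set X, IsOpen U → IsOpen V → U.Nonempty → V.Nonempty →
    ∃ K : ℕ, 1 ≤ K ∧ ∀ n ≥ K, ∃ x ∈ U, relIter F n x ⊆ V

lemma relImage_nonempty {X : Type*} (F : Set (X → X)) (hF : F.Nonempty) {A : Set X}
    (hA : A.Nonempty) : (relImage F A).Nonempty := by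
  obtain ⟨f, hf⟩ := hF
  obtain ⟨a, ha⟩ := hA
  exact ⟨f a, mem_biUnion hf ⟨a, ha, rfl⟩⟩

lemma relIter_succ {X : Type*} (F : Set (X → X)) (n : ℕ) (x : X) :
    relIter F (n + 1) x = relImage F (relIter F n x) := by
  rw [relIter, Function.iterate_succ_apply']; rfl

lemma relIter_nonempty {X : Type*} (F : Set (X → X)) (hF : F.Nonempty) (n : ℕ) (x : X) :
    (relIter F n x).Nonempty := by
  induction n with
  | zero => exact ⟨x, rfl⟩
  | succ n ih => rw [relIter_succ]; exact relImage_nonempty F hF ih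

lemma key {X : Type*} [MetricSpace X] [CompactSpace X]
    (F : Set (X → X)) (hFfin : F.Finite)
    (hFcont : ∀ f ∈ F, Continuous f)
    (hFcomm : ∀ f ∈ F, ∀ g ∈ F, f ∘ g = g ∘ f)
    (htwo : ∃ f ∈ F, ∃ g ∈ F, f ≠ g)
    (h : ∀ V : Set X, IsOpen V → V.Nonempty → ∃ n, 1 ≤ n ∧ ∃ x, relIter F n x ⊆ V) :
    False := by
  obtain ⟨f₀, hf₀, g₀, hg₀, hfg⟩ := htwo
  have hFne : F.Nonempty := ⟨f₀, hf₀⟩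
  set C : ℝ → Set X := fun δ => {y | ∀ u ∈ F, ∀ v ∈ F, dist (u y) (v y) ≤ δ} with hC
  have hCclosed : ∀ δ, IsClosed (C δ) := by
    intro δ
    have : C δ = ⋂ u ∈ F, ⋂ v ∈ F, {y | dist (u y) (v y) ≤ δ} := by
      ext y; simp [hC, mem_iInter]
    rw [this]
    exact isClosed_biInter fun u hu => isClosed_biInter fun v hv =>
      isClosed_le ((hFcont u hu).dist (hFcont v hv)) continuous_const
  -- step (a)
  have stepA : ∀ δ > 0, ∀ p : X, ∃ f ∈ F, ∃ c ∈ C δ, f c = p := by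
    intro δ hδ p
    set S : Set X := ⋃ f ∈ F, f '' C δ with hS
    have hSclosed : IsClosed S :=
      hFfin.isClosed_biUnion fun f hf =>
        (((hCclosed δ).isCompact).image (hFcont f hf)).isClosed
    have hpS : p ∈ closure S := by
      rw [_root_.mem_closure_iff]
      intro O hO hpO
      obtain ⟨n, hn1, x, hsub⟩ := h (O ∩ ball p (δ / 2)) (hO.inter isOpen_ball)
        ⟨p, hpO, mem_ball_self (by linarith)⟩
      obtain ⟨m, rfl⟩ : ∃ m, n = m + 1 := ⟨n - 1, (Nat.succ_pred_eq_of_pos hn1).symm⟩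
      obtain ⟨w, hw⟩ := relIter_nonempty F hFne (m + 1) x
      refine ⟨w, (hsub hw).1, ?_⟩
      rw [relIter_succ] at hw
      obtain ⟨y, hy⟩ : ∃ y ∈ relIter F m x, ∃ f ∈ F, f y = w := by
        simp only [relImage, mem_iUnion] at hw
        obtain ⟨f, hf, y, hy, hfy⟩ := hw
        exact ⟨y, hy, f, hf, hfy⟩
      obtain ⟨hy, f, hf, hfy⟩ := hy
      have hyC : y ∈ C δ := by
        intro u hu v hv
        have hmem : ∀ r ∈ F, r y ∈ ball p (δ / 2) := by
          intro r hr
          have : r y ∈ relIter F (m + 1) x := by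
            rw [relIter_succ]
            exact mem_biUnion hr ⟨y, hy, rfl⟩
          exact (hsub this).2
        have h1 := mem_ball.mp (hmem u hu)
        have h2 := mem_ball.mp (hmem v hv)
        calc dist (u y) (v y) ≤ dist (u y) p + dist p (v y) := dist_triangle _ _ _
          _ ≤ δ := by rw [dist_comm p (v y)]; linarith
      exact mem_biUnion hf ⟨y, hyC, hfy⟩
    rw [hSclosed.closure_eq] at hpS
    simp only [hS, mem_iUnion] at hpS
    obtain ⟨f, hf, c, hc, hfc⟩ := hpS
    exact ⟨f, hf, c, hc, hfc⟩
  -- step (b): the equalizer maps onto X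
  set E : Set X := {y | ∀ u ∈ F, ∀ v ∈ F, u y = v y} with hE
  have stepB : ∀ p : X, ∃ c ∈ E, ∃ f ∈ F, f c = p := by
    intro p
    set D : Set X := ⋃ f ∈ F, f ⁻¹' {p} with hD
    have hDclosed : IsClosed D :=
      hFfin.isClosed_biUnion fun f hf => isClosed_singleton.preimage (hFcont f hf)
    set T : ℕ → Set X := fun k => C (1 / (k + 1)) ∩ D with hT
    have hTne : ∀ k, (T k).Nonempty := by
      intro k
      have hpos : (0 : ℝ) < 1 / (k + 1) := by positivity
      obtain ⟨f, hf, c, hc, hfc⟩ := stepA _ hpos p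
      exact ⟨c, hc, mem_biUnion hf (by simp [hfc])⟩
    have hTcl : ∀ k, IsClosed (T k) := fun k => (hCclosed _).inter hDclosed
    have hTsub : ∀ k, T (k + 1) ⊆ T k := by
      intro k y hy
      refine ⟨fun u hu v hv => le_trans (hy.1 u hu v hv) ?_, hy.2⟩
      apply one_div_le_one_div_of_le
      · positivity
      · push_cast; linarith
    obtain ⟨c, hc⟩ := IsCompact.nonempty_iInter_of_sequence_nonempty_isCompact_isClosed
      T hTsub hTne ((hTcl 0).isCompact) hTcl
    simp only [mem_iInter] at hc
    have hcE : c ∈ E := by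
      intro u hu v hv
      have hle : dist (u c) (v c) ≤ 0 := by
        by_contra hlt
        push_neg at hlt
        obtain ⟨k, hk⟩ := exists_nat_one_div_lt hlt
        have := (hc k).1 u hu v hv
        push_cast at this hk
        linarith
      exact dist_le_zero.mp hle
    have : c ∈ D := (hc 0).2
    simp only [hD, mem_iUnion, mem_preimage, mem_singleton_iff] at this
    obtain ⟨f, hf, hfc⟩ := this
    exact ⟨c, hcE, f, hf, hfc⟩
  -- step (c): E is invariant
  have stepC : ∀ c ∈ E, ∀ f ∈ F, f c ∈ E := by
    intro c hcE f hf u hu v hv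
    have h1 : u (f c) = f (u c) := congrFun (hFcomm u hu f hf) c
    have h2 : v (f c) = f (v c) := congrFun (hFcomm v hv f hf) c
    rw [h1, h2, hcE u hu v hv]
  -- step (d)
  have hall : ∀ p : X, p ∈ E := by
    intro p
    obtain ⟨c, hcE, f, hf, hfc⟩ := stepB p
    rw [← hfc]
    exact stepC c hcE f hf
  exact hfg (funext fun p => hall p f₀ hf₀ g₀ hg₀)

/-- A finite commutative family of continuous self-maps of a compact metric space containing
two distinct maps is neither super-weakly mixing nor super-topologically mixing. -/
theorem stmt_2 {X : Type*} [MetricSpace X] [CompactSpace X]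
    (F : Set (X → X)) (hFfin : F.Finite)
    (hFcont : ∀ f ∈ F, Continuous f)
    (hFcomm : ∀ f ∈ F, ∀ g ∈ F, f ∘ g = g ∘ f)
    (htwo : ∃ f ∈ F, ∃ g ∈ F, f ≠ g) :
    ¬ SuperWeaklyMixing F ∧ ¬ SuperTopMixing F := by
  have hne : ∀ (P : (∀ V : Set X, IsOpen V → V.Nonempty → ∃ n, 1 ≤ n ∧ ∃ x, relIter F n x ⊆ V)), False :=
    fun P => key F hFfin hFcont hFcomm htwo P
  constructor
  · intro hswm
    apply hne
    intro V hV hVne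
    obtain ⟨n, hn, x₁, hx₁, x₂, hx₂, hs₁, hs₂⟩ := hswm V V V V hV hV hV hV hVne hVne hVne hVne
    exact ⟨n, hn, x₁, hs₁⟩
  · intro hstm
    apply hne
    intro V hV hVne
    obtain ⟨K, hK, hall⟩ := hstm V V hV hV hVne hVne
    obtain ⟨x, _, hs⟩ := hall K le_rfl
    exact ⟨K, hK, x, hs⟩
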